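/- Let $n \geq 2$ be a natural number, $\sigma \geq 0$, $\theta \in [0,1]$, and $\eta_1, \ldots, \eta_n \in \mathbb{R}$. Then $e^{\sigma \sum_{j=1}^n |\eta_j|} - e^{\sigma |\sum_{j=1}^n \eta_j|} \leq \sum_{k=1}^n \left(2\sigma \min\left(\left|\sum_{j \neq k} \eta_j\right|, |\eta_k|\right)\right)^{\theta} e^{\sigma \sum_{j=1}^n |\eta_j|}$. -/

import Mathlib

/-!
For two reals, `|a| + |b| - |a + b| ≤ 2 min(|a|, |b|)`. Applying this to `a = ∑_{j ≠ k} η_j`,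
`b = η_k` and summing over `k`, the loss `∑ |η_j| - |∑ η_j|` is at most `2 ∑_k m_k`, where `m_k`
is the minimum in the statement (the terms `|∑_{j ≠ k} η_j|` add up to at least
`(n - 1) |∑ η_j|`). On the other hand `e^x - e^y ≤ min(1, x - y) e^x`, the truncation
`t ↦ min(1, t)` is subadditive on `[0, ∞)`, and `min(1, t) ≤ t^θ` for `t ≥ 0` and `θ ∈ [0, 1]`.
-/

open Finset

lemma abs_add_abs_sub_abs_add_le (a b : ℝ) : |a| + |b| - |a + b| ≤ 2 * min |a| |b| := by
  have ha : |a| ≤ |a + b| + |b| := by simpa using abs_sub (a + b) b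
  have hb : |b| ≤ |a + b| + |a| := by simpa [add_comm] using abs_sub (a + b) a
  rcases le_total |a| |b| with h | h
  · rw [min_eq_left h]; linarith
  · rw [min_eq_right h]; linarith

lemma card_sub_one_mul_abs_sum_le {ι : Type*} (s : Finset ι) (f : ι → ℝ) :
    ((#s : ℝ) - 1) * |∑ i ∈ s, f i| ≤ ∑ i ∈ s, |∑ j ∈ s, f j - f i| :=
  calc ((#s : ℝ) - 1) * |∑ i ∈ s, f i|
      ≤ |(#s : ℝ) - 1| * |∑ i ∈ s, f i| := by gcongr; exact le_abs_self _
    _ = |∑ i ∈ s, (∑ j ∈ s, f j - f i)| := by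
        rw [← abs_mul, sum_sub_distrib, sum_const, nsmul_eq_mul]; ring_nf
    _ ≤ ∑ i ∈ s, |∑ j ∈ s, f j - f i| := abs_sum_le_sum_abs _ _

lemma sum_abs_sub_abs_sum_le {ι : Type*} [DecidableEq ι] (s : Finset ι) (f : ι → ℝ) :
    ∑ i ∈ s, |f i| - |∑ i ∈ s, f i| ≤ 2 * ∑ i ∈ s, min |∑ j ∈ s.erase i, f j| |f i| := by
  set T := ∑ i ∈ s, f i
  have pointwise : ∀ i ∈ s,
      |T - f i| + |f i| - |T| ≤ 2 * min |∑ j ∈ s.erase i, f j| |f i| := fun i hi => by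
    simpa [sum_erase_eq_sub hi] using abs_add_abs_sub_abs_add_le (T - f i) (f i)
  have summed := sum_le_sum pointwise
  rw [← mul_sum, sum_sub_distrib, sum_add_distrib, sum_const, nsmul_eq_mul] at summed
  linarith [card_sub_one_mul_abs_sum_le s f]

lemma Real.exp_sub_exp_le_min_one_mul_exp (x y : ℝ) :
    Real.exp x - Real.exp y ≤ min 1 (x - y) * Real.exp x := by
  have hy : Real.exp y = Real.exp (-(x - y)) * Real.exp x := by
    rw [← Real.exp_add]; ring_nf
  have hdecay : 1 - Real.exp (-(x - y)) ≤ min 1 (x - y) :=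
    le_min (by linarith [Real.exp_pos (-(x - y))]) (by linarith [Real.one_sub_le_exp_neg (x - y)])
  rw [hy]
  nlinarith [Real.exp_pos x]

lemma min_one_add_le {x y : ℝ} (hx : 0 ≤ x) (hy : 0 ≤ y) :
    min 1 (x + y) ≤ min 1 x + min 1 y := by
  simp only [min_def]
  split_ifs <;> linarith

lemma min_one_sum_le_sum_min_one {ι : Type*} (s : Finset ι) (g : ι → ℝ)
    (hg : ∀ i ∈ s, 0 ≤ g i) : min 1 (∑ i ∈ s, g i) ≤ ∑ i ∈ s, min 1 (g i) :=
  le_sum_of_subadditive_on_pred (min 1) (0 ≤ ·) (by simp) (fun _ _ => min_one_add_le)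
    (fun _ _ => add_nonneg) g hg

lemma min_one_le_rpow {x θ : ℝ} (hx : 0 ≤ x) (hθ₀ : 0 ≤ θ) (hθ₁ : θ ≤ 1) :
    min 1 x ≤ x ^ θ := by
  rcases le_total x 1 with h | h
  · rcases hx.eq_or_lt with rfl | hx
    · simpa using Real.rpow_nonneg le_rfl θ
    · calc min 1 x ≤ x ^ (1 : ℝ) := by rw [Real.rpow_one]; exact min_le_right _ _
        _ ≤ x ^ θ := Real.rpow_le_rpow_of_exponent_ge hx h hθ₁
  · calc min 1 x ≤ x ^ (0 : ℝ) := by rw [Real.rpow_zero]; exact min_le_left _ _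
      _ ≤ x ^ θ := Real.rpow_le_rpow_of_exponent_le h hθ₀

open Finset in
theorem exp_weight_diff_general (n : ℕ) (σ θ : ℝ) (hσ : 0 ≤ σ)
    (hθ₀ : 0 ≤ θ) (hθ₁ : θ ≤ 1) (η : Fin n → ℝ) :
    Real.exp (σ * ∑ j, |η j|) - Real.exp (σ * |∑ j, η j|) ≤
      ∑ k, (2 * σ * min |∑ j ∈ univ.erase k, η j| |η k|) ^ θ *
        Real.exp (σ * ∑ j, |η j|) := by
  set m : Fin n → ℝ := fun k => min |∑ j ∈ univ.erase k, η j| |η k|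
  have hloss : σ * ∑ j, |η j| - σ * |∑ j, η j| ≤ ∑ k, 2 * σ * m k :=
    calc σ * ∑ j, |η j| - σ * |∑ j, η j| = σ * (∑ j, |η j| - |∑ j, η j|) := by ring
      _ ≤ σ * (2 * ∑ k, m k) := by gcongr; exact sum_abs_sub_abs_sum_le univ η
      _ = ∑ k, 2 * σ * m k := by
          rw [mul_sum, mul_sum]; exact sum_congr rfl fun k _ => by ring
  calc Real.exp (σ * ∑ j, |η j|) - Real.exp (σ * |∑ j, η j|)
      ≤ min 1 (σ * ∑ j, |η j| - σ * |∑ j, η j|) * Real.exp (σ * ∑ j, |η j|) :=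
        Real.exp_sub_exp_le_min_one_mul_exp _ _
    _ ≤ min 1 (∑ k, 2 * σ * m k) * Real.exp (σ * ∑ j, |η j|) := by gcongr
    _ ≤ (∑ k, min 1 (2 * σ * m k)) * Real.exp (σ * ∑ j, |η j|) := by
        gcongr
        exact min_one_sum_le_sum_min_one _ _ fun k _ => by positivity
    _ ≤ _ := by
        rw [sum_mul]
        gcongr with k
        exact min_one_le_rpow (by positivity) hθ₀ hθ₁

open Finset in
theorem exp_weight_diff (n : ℕ) (hn : 2 ≤ n) (σ θ : ℝ) (hσ : 0 ≤ σ)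
    (hθ₀ : 0 ≤ θ) (hθ₁ : θ ≤ 1) (η : Fin n → ℝ) :
    Real.exp (σ * ∑ j, |η j|) - Real.exp (σ * |∑ j, η j|) ≤
      ∑ k, (2 * σ * min |∑ j ∈ univ.erase k, η j| |η k|) ^ θ *
        Real.exp (σ * ∑ j, |η j|) :=
  exp_weight_diff_general n σ θ hσ hθ₀ hθ₁ η
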